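/- Let ε > 0, let b : [0,∞)×𝕋ⁿ → ℝⁿ be smooth on the torus 𝕋ⁿ, let Θ be a smooth strictly positive solution of Θ_t + div(bΘ) = ε ΔΘ with Θ(0,x) = 1, and let v be a smooth solution of v_t + div(bv) = ε Δv with bounded initial data v(0,·) = v_0. Then |v(t,x)| ≤ Θ(t,x) · sup_{y∈𝕋ⁿ} |v_0(y)| for all (t,x). -/

import Mathlib

/-- Partial derivative in the `i`-th coordinate direction. -/
noncomputable def pderiv₁₀ {n : ℕ} (i : Fin n) (g : (Fin n → ℝ) → ℝ) (x : Fin n → ℝ) : ℝ :=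
  fderiv ℝ g x (Pi.single i 1)

/-- A function on `ℝⁿ` representing a function on the torus `𝕋ⁿ = [0,1]ⁿ`:
it is periodic with respect to the lattice `ℤⁿ`. -/
def TorusFun₁₀ {n : ℕ} (g : (Fin n → ℝ) → ℝ) : Prop :=
  ∀ (x : Fin n → ℝ) (k : Fin n → ℤ), g (x + fun i => (k i : ℝ)) = g x

/-! The bound is the maximum principle applied to `±v - C Θ` with `C = sup |v₀|`: by linearity
these solve the same equation, and they are `≤ 0` at `t = 0` because `Θ(0,·) = 1`.

For the maximum principle, take `λ > sup |div b|` on `[0,T] × [0,1]ⁿ` and maximize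
`e^{-λs} w(s,y)` over `[0,T] × ℝⁿ`; by periodicity the maximum is attained with `y` in the unit
cube. At a maximum with `s > 0` the spatial gradient vanishes, `Δw ≤ 0` and `w_t ≥ λ w`, so the
equation `w_t + (div b) w + b · ∇w = ε Δw` gives `(λ + div b) w ≤ 0`, i.e. `w ≤ 0` there. -/

open Set Filter Topology Function Real

theorem IsLocalMax.deriv_deriv_nonpos {f : ℝ → ℝ} {a : ℝ} (h : IsLocalMax f a)
    (hc : ContinuousAt f a) : deriv (deriv f) a ≤ 0 := by
  by_contra! hpos
  have hmin : IsLocalMin f a := isLocalMin_of_deriv_deriv_pos hpos h.deriv_eq_zero hc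
  have hconst : f =ᶠ[𝓝 a] fun _ => f a := by
    filter_upwards [h, hmin] with x hx hx' using le_antisymm hx hx'
  have hderiv : deriv f =ᶠ[𝓝 a] fun _ => 0 := by
    filter_upwards [eventually_eventually_nhds.2 hconst] with x (hx : f =ᶠ[𝓝 x] fun _ => f a)
    simpa using hx.deriv_eq
  simp [hderiv.deriv_eq] at hpos

theorem IsMaxOn.deriv_nonneg_of_Icc {f : ℝ → ℝ} {a b : ℝ} (hab : a < b)
    (hmax : IsMaxOn f (Icc a b) b) (hf : DifferentiableAt ℝ f b) : 0 ≤ deriv f b := by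
  have hcone : a - b ∈ posTangentConeAt (Icc a b) b :=
    sub_mem_posTangentConeAt_of_segment_subset (by rw [segment_symm, segment_eq_Icc hab.le])
  have := hmax.localize.hasFDerivWithinAt_nonpos
    hf.hasDerivAt.hasFDerivAt.hasFDerivWithinAt hcone
  simp only [ContinuousLinearMap.toSpanSingleton_apply, smul_eq_mul] at this
  exact nonneg_of_mul_nonpos_right this (sub_neg.2 hab)

theorem mul_le_deriv_of_isMaxOn_exp_mul {f : ℝ → ℝ} {c s₀ : ℝ} (hs₀ : 0 < s₀)
    (hmax : IsMaxOn (fun s => exp (-c * s) * f s) (Icc 0 s₀) s₀)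
    (hf : DifferentiableAt ℝ f s₀) : c * f s₀ ≤ deriv f s₀ := by
  have hweight : HasDerivAt (fun s => exp (-c * s)) (exp (-c * s₀) * -c) s₀ := by
    simpa [mul_comm] using ((hasDerivAt_id s₀).const_mul (-c)).exp
  have hprod : HasDerivAt (fun s => exp (-c * s) * f s) _ s₀ := hweight.mul hf.hasDerivAt
  have := hmax.deriv_nonneg_of_Icc hs₀ hprod.differentiableAt
  rw [hprod.deriv] at this
  have hexp := exp_pos (-c * s₀)
  nlinarith

section Slices

variable {E F G : Type*} [NormedAddCommGroup E] [NormedSpace ℝ E] [NormedAddCommGroup F]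
  [NormedSpace ℝ F] [NormedAddCommGroup G] [NormedSpace ℝ G] {f : E → F → G}

theorem ContDiff.slice_left {k : WithTop ℕ∞} (hf : ContDiff ℝ k (uncurry f)) (t : E) :
    ContDiff ℝ k (f t) :=
  hf.comp (contDiff_const.prodMk contDiff_id)

theorem Differentiable.slice_right (hf : Differentiable ℝ (uncurry f)) (x : F) :
    Differentiable ℝ fun t => f t x :=
  hf.comp (differentiable_id.prodMk (differentiable_const x))

end Slices

section PartialDerivatives

variable {n : ℕ}

theorem pderiv₁₀_linear_comb {f g : (Fin n → ℝ) → ℝ} {x : Fin n → ℝ}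
    (hf : DifferentiableAt ℝ f x) (hg : DifferentiableAt ℝ g x) (α β : ℝ) (i : Fin n) :
    pderiv₁₀ i (fun y => α * f y + β * g y) x = α * pderiv₁₀ i f x + β * pderiv₁₀ i g x := by
  simp [pderiv₁₀, fderiv_fun_add (hf.const_mul α) (hg.const_mul β), fderiv_const_mul hf,
    fderiv_const_mul hg]

theorem pderiv₁₀_mul {f g : (Fin n → ℝ) → ℝ} {x : Fin n → ℝ}
    (hf : DifferentiableAt ℝ f x) (hg : DifferentiableAt ℝ g x) (i : Fin n) :
    pderiv₁₀ i (fun y => f y * g y) x = pderiv₁₀ i f x * g x + f x * pderiv₁₀ i g x := by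
  simp [pderiv₁₀, fderiv_fun_mul hf hg, mul_comm, add_comm]

theorem ContDiff.differentiable_pderiv₁₀ {f : (Fin n → ℝ) → ℝ} (hf : ContDiff ℝ 2 f)
    (i : Fin n) : Differentiable ℝ (pderiv₁₀ i f) :=
  ((hf.fderiv_right (m := 1) (by norm_num)).clm_apply contDiff_const).differentiable one_ne_zero

theorem hasDerivAt_line_pderiv₁₀ {f : (Fin n → ℝ) → ℝ} (y : Fin n → ℝ) (i : Fin n) {r : ℝ}
    (hf : DifferentiableAt ℝ f (y + r • Pi.single i 1)) :
    HasDerivAt (fun r : ℝ => f (y + r • Pi.single i 1))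
      (pderiv₁₀ i f (y + r • Pi.single i 1)) r := by
  have hline : HasDerivAt (fun r : ℝ => y + r • (Pi.single i 1 : Fin n → ℝ)) (Pi.single i 1) r :=
    by simpa using ((hasDerivAt_id r).smul_const (Pi.single i (1 : ℝ))).const_add y
  exact hf.hasFDerivAt.comp_hasDerivAt r hline

theorem IsLocalMax.pderiv₁₀_pderiv₁₀_nonpos {f : (Fin n → ℝ) → ℝ} {y : Fin n → ℝ}
    (h : IsLocalMax f y) (hf : ContDiff ℝ 2 f) (i : Fin n) :
    pderiv₁₀ i (pderiv₁₀ i f) y ≤ 0 := by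
  have hline : Continuous fun r : ℝ => y + r • (Pi.single i 1 : Fin n → ℝ) := by fun_prop
  have hmax : IsLocalMax (fun r : ℝ => f (y + r • Pi.single i 1)) 0 :=
    IsLocalMax.comp_continuous (g := fun r : ℝ => y + r • Pi.single i 1) (by simpa using h)
      hline.continuousAt
  have hderiv : deriv (fun r : ℝ => f (y + r • Pi.single i 1))
      = fun r => pderiv₁₀ i f (y + r • Pi.single i 1) :=
    funext fun r => (hasDerivAt_line_pderiv₁₀ y i (hf.differentiable two_ne_zero _)).deriv
  have := hmax.deriv_deriv_nonpos (hf.continuous.comp hline).continuousAt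
  rwa [hderiv, (hasDerivAt_line_pderiv₁₀ y i (hf.differentiable_pderiv₁₀ i _)).deriv,
    zero_smul, add_zero] at this

end PartialDerivatives

section Divergence

variable {n : ℕ}

theorem pderiv₁₀_slice_eq_fderiv_uncurry {b : ℝ → (Fin n → ℝ) → Fin n → ℝ} {s : ℝ}
    {y : Fin n → ℝ} (hb : DifferentiableAt ℝ (uncurry b) (s, y)) (i j : Fin n) :
    pderiv₁₀ i (fun z => b s z j) y = fderiv ℝ (uncurry b) (s, y) (0, Pi.single i 1) j := by
  have hslice : HasFDerivAt (fun z => (s, z))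
      ((0 : (Fin n → ℝ) →L[ℝ] ℝ).prod (ContinuousLinearMap.id ℝ (Fin n → ℝ))) y :=
    (hasFDerivAt_const s y).prodMk (hasFDerivAt_id y)
  have : HasFDerivAt (fun z => b s z j) _ y :=
    (ContinuousLinearMap.proj (R := ℝ) (φ := fun _ : Fin n => ℝ) j).hasFDerivAt.comp y
      (hb.hasFDerivAt.comp y hslice)
  rw [pderiv₁₀, this.fderiv]
  simp

noncomputable def divergence (b : (Fin n → ℝ) → Fin n → ℝ) (x : Fin n → ℝ) : ℝ :=
  ∑ i, pderiv₁₀ i (fun y => b y i) x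

theorem continuous_divergence {b : ℝ → (Fin n → ℝ) → Fin n → ℝ}
    (hb : ContDiff ℝ 1 (uncurry b)) :
    Continuous fun p : ℝ × (Fin n → ℝ) => divergence (b p.1) p.2 := by
  have hfd := hb.continuous_fderiv_apply one_ne_zero
  refine continuous_finsetSum _ fun i _ => ?_
  simp only [pderiv₁₀_slice_eq_fderiv_uncurry (hb.differentiable one_ne_zero _)]
  exact (continuous_apply i).comp (hfd.comp (continuous_id.prodMk continuous_const))

theorem sum_pderiv₁₀_mul_of_fderiv_eq_zero {b : (Fin n → ℝ) → Fin n → ℝ}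
    {w : (Fin n → ℝ) → ℝ} {x : Fin n → ℝ} (hb : DifferentiableAt ℝ b x)
    (hw : DifferentiableAt ℝ w x) (hcrit : fderiv ℝ w x = 0) :
    ∑ i, pderiv₁₀ i (fun y => b y i * w y) x = divergence b x * w x := by
  rw [divergence, Finset.sum_mul]
  refine Finset.sum_congr rfl fun i _ => ?_
  rw [pderiv₁₀_mul (differentiableAt_pi.1 hb i) hw]
  simp [pderiv₁₀, hcrit]

end Divergence

section Torus

variable {n : ℕ}

theorem exists_int_add_mem_unitCube (y : Fin n → ℝ) :
    ∃ k : Fin n → ℤ, (y + fun i => (k i : ℝ)) ∈ Icc (0 : Fin n → ℝ) 1 := by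
  refine ⟨fun i => -⌊y i⌋, fun i => ?_, fun i => ?_⟩ <;>
    simp only [Pi.add_apply, Int.cast_neg, ← sub_eq_add_neg, Int.self_sub_floor, Pi.zero_apply,
      Pi.one_apply]
  exacts [Int.fract_nonneg (y i), (Int.fract_lt_one (y i)).le]

theorem exists_isMaxOn_prod_univ_of_torusFun {S : Set ℝ} (hS : IsCompact S) (hne : S.Nonempty)
    {Ψ : ℝ × (Fin n → ℝ) → ℝ} (hΨ : Continuous Ψ) (hper : ∀ s, TorusFun₁₀ fun y => Ψ (s, y)) :
    ∃ p ∈ S ×ˢ Icc (0 : Fin n → ℝ) 1, IsMaxOn Ψ (S ×ˢ univ) p := by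
  obtain ⟨p, hp, hmax⟩ := (hS.prod isCompact_Icc).exists_isMaxOn
    (hne.prod (nonempty_Icc.2 zero_le_one)) hΨ.continuousOn
  refine ⟨p, hp, fun ⟨s, y⟩ ⟨hs, _⟩ => ?_⟩
  obtain ⟨k, hk⟩ := exists_int_add_mem_unitCube y
  simpa [hper s y k] using hmax (mk_mem_prod hs hk)

end Torus

section AdvectionDiffusion

variable {n : ℕ} {ε : ℝ} {b : ℝ → (Fin n → ℝ) → Fin n → ℝ}

def SolvesAdvectionDiffusion (ε : ℝ) (b : ℝ → (Fin n → ℝ) → Fin n → ℝ)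
    (w : ℝ → (Fin n → ℝ) → ℝ) : Prop :=
  ∀ t x, 0 ≤ t →
    deriv (fun s => w s x) t + ∑ i, pderiv₁₀ i (fun y => b t y i * w t y) x
      = ε * ∑ i, pderiv₁₀ i (pderiv₁₀ i (w t)) x

theorem SolvesAdvectionDiffusion.linear_combination {v w : ℝ → (Fin n → ℝ) → ℝ}
    (hb : ContDiff ℝ 1 (uncurry b)) (hv : ContDiff ℝ 2 (uncurry v))
    (hw : ContDiff ℝ 2 (uncurry w)) (hsv : SolvesAdvectionDiffusion ε b v)
    (hsw : SolvesAdvectionDiffusion ε b w) (α β : ℝ) :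
    SolvesAdvectionDiffusion ε b fun t x => α * v t x + β * w t x := by
  intro t x ht
  have hbt : Differentiable ℝ (b t) := (hb.slice_left t).differentiable one_ne_zero
  have hvt := hv.slice_left t
  have hwt := hw.slice_left t
  have hvt' : Differentiable ℝ (v t) := hvt.differentiable two_ne_zero
  have hwt' : Differentiable ℝ (w t) := hwt.differentiable two_ne_zero
  have htime : deriv (fun s => α * v s x + β * w s x) t
      = α * deriv (fun s => v s x) t + β * deriv (fun s => w s x) t := by
    have hvx := (hv.differentiable two_ne_zero).slice_right x t
    have hwx := (hw.differentiable two_ne_zero).slice_right x t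
    rw [deriv_fun_add (hvx.const_mul α) (hwx.const_mul β), deriv_const_mul α hvx,
      deriv_const_mul β hwx]
  have hflux : ∀ i, pderiv₁₀ i (fun y => b t y i * (α * v t y + β * w t y)) x
      = α * pderiv₁₀ i (fun y => b t y i * v t y) x
        + β * pderiv₁₀ i (fun y => b t y i * w t y) x := fun i => by
    have hbi := differentiable_pi.1 hbt i
    simp only [mul_add, mul_left_comm (b t _ i)]
    exact pderiv₁₀_linear_comb ((hbi.mul hvt') x) ((hbi.mul hwt') x) α β i
  have hdiff : ∀ i, pderiv₁₀ i (pderiv₁₀ i (fun y => α * v t y + β * w t y)) x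
      = α * pderiv₁₀ i (pderiv₁₀ i (v t)) x + β * pderiv₁₀ i (pderiv₁₀ i (w t)) x := fun i => by
    have hlin : pderiv₁₀ i (fun y => α * v t y + β * w t y)
        = fun z => α * pderiv₁₀ i (v t) z + β * pderiv₁₀ i (w t) z :=
      funext fun z => pderiv₁₀_linear_comb (hvt' z) (hwt' z) α β i
    rw [hlin]
    exact pderiv₁₀_linear_comb (hvt.differentiable_pderiv₁₀ i x)
      (hwt.differentiable_pderiv₁₀ i x) α β i
  simp only [htime, hflux, hdiff, Finset.sum_add_distrib, ← Finset.mul_sum]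
  linear_combination α * hsv t x ht + β * hsw t x ht

theorem SolvesAdvectionDiffusion.mul_nonpos_of_isMaxOn {w : ℝ → (Fin n → ℝ) → ℝ}
    (hε : 0 ≤ ε) (hw : ContDiff ℝ 2 (uncurry w)) (hsol : SolvesAdvectionDiffusion ε b w)
    {c s₀ : ℝ} {y₀ : Fin n → ℝ} (hb : DifferentiableAt ℝ (b s₀) y₀) (hs₀ : 0 < s₀)
    (hmax : IsMaxOn (fun p : ℝ × (Fin n → ℝ) => exp (-c * p.1) * w p.1 p.2)
      (Icc 0 s₀ ×ˢ univ) (s₀, y₀)) :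
    (c + divergence (b s₀) y₀) * w s₀ y₀ ≤ 0 := by
  have hws₀ := hw.slice_left s₀
  have hspace : IsLocalMax (w s₀) y₀ := by
    refine (isMaxOn_univ_iff.2 fun y => ?_).isLocalMax univ_mem
    exact le_of_mul_le_mul_left (hmax (mk_mem_prod ⟨hs₀.le, le_rfl⟩ (mem_univ y)))
      (exp_pos _)
  have htime : c * w s₀ y₀ ≤ deriv (fun s => w s y₀) s₀ :=
    mul_le_deriv_of_isMaxOn_exp_mul hs₀ (fun s hs => hmax (mk_mem_prod hs (mem_univ y₀)))
      ((hw.differentiable two_ne_zero).slice_right y₀ s₀)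
  have hflux : ∑ i, pderiv₁₀ i (fun y => b s₀ y i * w s₀ y) y₀
      = divergence (b s₀) y₀ * w s₀ y₀ :=
    sum_pderiv₁₀_mul_of_fderiv_eq_zero hb (hws₀.differentiable two_ne_zero _)
      hspace.fderiv_eq_zero
  have hlap : ε * ∑ i, pderiv₁₀ i (pderiv₁₀ i (w s₀)) y₀ ≤ 0 :=
    mul_nonpos_of_nonneg_of_nonpos hε
      (Finset.sum_nonpos fun i _ => hspace.pderiv₁₀_pderiv₁₀_nonpos hws₀ i)
  linarith [hsol s₀ y₀ hs₀.le]

theorem SolvesAdvectionDiffusion.nonpos {w : ℝ → (Fin n → ℝ) → ℝ} (hε : 0 ≤ ε)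
    (hb : ContDiff ℝ 1 (uncurry b)) (hw : ContDiff ℝ 2 (uncurry w))
    (hper : ∀ t, TorusFun₁₀ (w t)) (hsol : SolvesAdvectionDiffusion ε b w)
    (h0 : ∀ x, w 0 x ≤ 0) {t : ℝ} (ht : 0 ≤ t) (x : Fin n → ℝ) : w t x ≤ 0 := by
  obtain ⟨Λ, hΛ⟩ := (isCompact_Icc.prod isCompact_Icc).exists_bound_of_continuousOn
    (continuous_divergence hb).continuousOn (s := Icc 0 t ×ˢ Icc (0 : Fin n → ℝ) 1)
  set Ψ := fun p : ℝ × (Fin n → ℝ) => exp (-(Λ + 1) * p.1) * w p.1 p.2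
  obtain ⟨⟨s₀, y₀⟩, ⟨hs₀, hy₀⟩, hmax⟩ := exists_isMaxOn_prod_univ_of_torusFun isCompact_Icc
    (nonempty_Icc.2 ht) (Ψ := Ψ) (by fun_prop) fun s y k => by simp only [Ψ, hper s y k]
  have hΨ₀ : Ψ (s₀, y₀) ≤ 0 := by
    rcases hs₀.1.eq_or_lt with rfl | hpos
    · simpa [Ψ] using h0 y₀
    have := hsol.mul_nonpos_of_isMaxOn hε hw
      ((hb.slice_left s₀).differentiable one_ne_zero y₀) hpos
      (hmax.on_subset (prod_mono (Icc_subset_Icc_right hs₀.2) subset_rfl))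
    have hdiv := neg_le_of_abs_le (hΛ (s₀, y₀) ⟨hs₀, hy₀⟩)
    exact mul_nonpos_of_nonneg_of_nonpos (exp_pos _).le
      (nonpos_of_mul_nonpos_right this (by linarith))
  have := (hmax (mk_mem_prod ⟨ht, le_rfl⟩ (mem_univ x))).trans hΨ₀
  exact nonpos_of_mul_nonpos_right this (exp_pos _)

end AdvectionDiffusion

theorem stmt10_general (n : ℕ)
    (ε : ℝ) (hε : 0 < ε)
    (b : ℝ → (Fin n → ℝ) → (Fin n → ℝ))
    (hb : ContDiff ℝ (⊤ : ℕ∞) (Function.uncurry b))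
    (Θ v : ℝ → (Fin n → ℝ) → ℝ)
    (hΘ : ContDiff ℝ (⊤ : ℕ∞) (Function.uncurry Θ))
    (hΘper : ∀ t, TorusFun₁₀ (Θ t))
    (hΘinit : ∀ x, Θ 0 x = 1)
    (hΘPDE : ∀ t x, 0 ≤ t →
      deriv (fun s => Θ s x) t + ∑ i, pderiv₁₀ i (fun y => b t y i * Θ t y) x
        = ε * ∑ i, pderiv₁₀ i (pderiv₁₀ i (Θ t)) x)
    (hv : ContDiff ℝ (⊤ : ℕ∞) (Function.uncurry v))
    (hvper : ∀ t, TorusFun₁₀ (v t))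
    (hvPDE : ∀ t x, 0 ≤ t →
      deriv (fun s => v s x) t + ∑ i, pderiv₁₀ i (fun y => b t y i * v t y) x
        = ε * ∑ i, pderiv₁₀ i (pderiv₁₀ i (v t)) x)
    (v₀ : (Fin n → ℝ) → ℝ) (hv₀ : ∀ x, v 0 x = v₀ x)
    (hv₀bdd : ∃ M, ∀ x, |v₀ x| ≤ M) :
    ∀ t x, 0 ≤ t → |v t x| ≤ Θ t x * ⨆ y, |v₀ y| := by
  intro t x ht
  set C := ⨆ y, |v₀ y|
  have hC : ∀ y, |v₀ y| ≤ C := by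
    obtain ⟨M, hM⟩ := hv₀bdd
    exact le_ciSup ⟨M, forall_mem_range.2 hM⟩
  have hb₁ : ContDiff ℝ 1 (uncurry b) := hb.of_le (WithTop.coe_le_coe.2 le_top)
  have hv₂ : ContDiff ℝ 2 (uncurry v) := hv.of_le (WithTop.coe_le_coe.2 le_top)
  have hΘ₂ : ContDiff ℝ 2 (uncurry Θ) := hΘ.of_le (WithTop.coe_le_coe.2 le_top)
  have bound (σ : ℝ) (hσ : |σ| = 1) : σ * v t x + -C * Θ t x ≤ 0 := by
    refine SolvesAdvectionDiffusion.nonpos hε.le hb₁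
      (w := fun t x => σ * v t x + -C * Θ t x)
      ((contDiff_const.mul hv₂).add (contDiff_const.mul hΘ₂)) (fun s y k => ?_)
      (SolvesAdvectionDiffusion.linear_combination hb₁ hv₂ hΘ₂ hvPDE hΘPDE σ (-C))
      (fun y => ?_) ht x
    · simp only [hvper s y k, hΘper s y k]
    · rw [hv₀, hΘinit, mul_one]
      have := le_abs_self (σ * v₀ y)
      rw [abs_mul, hσ, one_mul] at this
      linarith [hC y]
  have hupper := bound 1 abs_one
  have hlower := bound (-1) (by simp)
  exact abs_le.2 ⟨by linarith, by linarith⟩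

/-- Weighted maximum principle on the torus: if `Θ > 0` solves
`Θ_t + div(bΘ) = ε ΔΘ` with `Θ(0,·) ≡ 1` and `v` solves `v_t + div(bv) = ε Δv`
with bounded initial data `v₀`, then `|v(t,x)| ≤ Θ(t,x) ⨯ sup_y |v₀ y|`. -/
theorem stmt10 (n : ℕ) (hn : 0 < n)
    (ε : ℝ) (hε : 0 < ε)
    (b : ℝ → (Fin n → ℝ) → (Fin n → ℝ))
    (hb : ContDiff ℝ (⊤ : ℕ∞) (Function.uncurry b))
    (hbper : ∀ t i, TorusFun₁₀ (fun x => b t x i))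
    (Θ v : ℝ → (Fin n → ℝ) → ℝ)
    (hΘ : ContDiff ℝ (⊤ : ℕ∞) (Function.uncurry Θ))
    (hΘper : ∀ t, TorusFun₁₀ (Θ t))
    (hΘpos : ∀ t x, 0 ≤ t → 0 < Θ t x)
    (hΘinit : ∀ x, Θ 0 x = 1)
    (hΘPDE : ∀ t x, 0 ≤ t →
      deriv (fun s => Θ s x) t + ∑ i, pderiv₁₀ i (fun y => b t y i * Θ t y) x
        = ε * ∑ i, pderiv₁₀ i (pderiv₁₀ i (Θ t)) x)
    (hv : ContDiff ℝ (⊤ : ℕ∞) (Function.uncurry v))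
    (hvper : ∀ t, TorusFun₁₀ (v t))
    (hvPDE : ∀ t x, 0 ≤ t →
      deriv (fun s => v s x) t + ∑ i, pderiv₁₀ i (fun y => b t y i * v t y) x
        = ε * ∑ i, pderiv₁₀ i (pderiv₁₀ i (v t)) x)
    (v₀ : (Fin n → ℝ) → ℝ) (hv₀ : ∀ x, v 0 x = v₀ x)
    (hv₀bdd : ∃ M, ∀ x, |v₀ x| ≤ M) :
    ∀ t x, 0 ≤ t → |v t x| ≤ Θ t x * ⨆ y, |v₀ y| :=
  stmt10_general n ε hε b hb Θ v hΘ hΘper hΘinit hΘPDE hv hvper hvPDE v₀ hv₀ hv₀bdd
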